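/- The function G_k is strictly increasing on the interval [0,1], satisfies G_k(0) < 0 and G_k(1) > 0, and has a unique zero β* in (0,1); moreover { β ∈ [0,1] : G_k(β) < 0 } = [0, β*), so β* = sup { β ∈ [0,1] : G_k(β) < 0 }. -/

import Mathlib

/-- The binary entropy function `H(t) = -t·log₂ t - (1-t)·log₂(1-t)`. -/
noncomputable def binEntropy (t : ℝ) : ℝ :=
  -(t * Real.logb 2 t) - (1 - t) * Real.logb 2 (1 - t)

/-- The exponent function `g_k(β,δ)`. -/
noncomputable def gExp (k : ℕ) (β δ : ℝ) : ℝ :=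
  (β - 2 * δ) * Real.logb 2 ((k : ℝ) - 1) - (1 - δ) * Real.logb 2 (k : ℝ) +
    2 * binEntropy δ + (1 - δ) * binEntropy ((β - 2 * δ) / (1 - δ))

/-- `G_k(β) = sup { g_k(β,δ) : 0 ≤ δ ≤ β/2 }`. -/
noncomputable def GExp (k : ℕ) (β : ℝ) : ℝ :=
  sSup (gExp k β '' Set.Icc 0 (β / 2))

/-!
Measured in nats, `g_k(β, δ) · log 2` is a sum of `negMulLog` terms (`gExpNat`). Moving along
`(β, δ) ↦ (β + 2t, δ + t)` keeps `β - 2δ` fixed and has slope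
`log k + log ((1 - δ)(1 - β + δ) / δ²) > 0`, since `δ` is smaller than both `1 - δ` and
`1 - β + δ`. Starting from a maximiser `δ` for `β₁`, this gives `G_k(β₁) < G_k(β₂)` for
`β₁ < β₂ ≤ 1`. Further `G_k(0) = -log₂ k < 0` and `G_k(1) ≥ g_k(1, 1/(k+1)) = 2 H(1/(k+1)) > 0`.
Writing `δ = βs/2` with `s ∈ [0,1]` makes the constraint set independent of `β`, so `G_k` is
continuous, and the intermediate value theorem produces the zero.
-/

open Set
open Real (log logb negMulLog)

/-- `log 2 · g_q(β, δ)`, with the entropies expanded into `negMulLog` terms. -/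
noncomputable def gExpNat (q β δ : ℝ) : ℝ :=
  (β - 2 * δ) * log (q - 1) - (1 - δ) * log q + 2 * negMulLog δ + negMulLog (1 - δ) +
    negMulLog (β - 2 * δ) + negMulLog (1 - β + δ)

lemma binEntropy_eq_div_log_two (t : ℝ) : binEntropy t = Real.binEntropy t / log 2 := by
  unfold binEntropy Real.binEntropy logb
  rw [Real.log_inv, Real.log_inv]
  ring

lemma mul_binEntropy_div {a b : ℝ} (hb : b ≠ 0) :
    b * Real.binEntropy (a / b) = negMulLog a + negMulLog (b - a) - negMulLog b := by
  have ha : negMulLog a = b * negMulLog (a / b) + a / b * negMulLog b := by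
    rw [← Real.negMulLog_mul, div_mul_cancel₀ a hb]
  have hba : negMulLog (b - a) = b * negMulLog (1 - a / b) + (1 - a / b) * negMulLog b := by
    rw [← Real.negMulLog_mul, sub_mul, one_mul, div_mul_cancel₀ a hb]
  rw [Real.binEntropy_eq_negMulLog_add_negMulLog_one_sub, ha, hba]
  ring

lemma gExp_eq_gExpNat_div (k : ℕ) {β δ : ℝ} (hδ : δ ≠ 1) :
    gExp k β δ = gExpNat k β δ / log 2 := by
  have h := mul_binEntropy_div (a := β - 2 * δ) (sub_ne_zero.2 hδ.symm)
  rw [show 1 - δ - (β - 2 * δ) = 1 - β + δ by ring] at h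
  unfold gExp gExpNat logb
  rw [binEntropy_eq_div_log_two, binEntropy_eq_div_log_two,
    Real.binEntropy_eq_negMulLog_add_negMulLog_one_sub δ]
  linear_combination h / log 2

@[fun_prop]
lemma Continuous.gExpNat {X : Type*} [TopologicalSpace X] {f g : X → ℝ} (q : ℝ)
    (hf : Continuous f) (hg : Continuous g) : Continuous fun x => gExpNat q (f x) (g x) := by
  unfold _root_.gExpNat
  fun_prop

lemma continuousOn_gExp (k : ℕ) {β : ℝ} (hβ : β < 2) :
    ContinuousOn (gExp k β) (Icc 0 (β / 2)) := by
  have : Continuous fun δ => gExpNat k β δ / log 2 := by fun_prop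
  exact this.continuousOn.congr fun δ hδ => gExp_eq_gExpNat_div k (by linarith [hδ.2])

lemma GExp_eq_sSup_reparam (k : ℕ) {β : ℝ} (hβ0 : 0 ≤ β) (hβ1 : β ≤ 1) :
    GExp k β = sSup ((fun s => gExpNat k β (β / 2 * s) / log 2) '' Icc 0 1) := by
  have hIcc : Icc 0 (β / 2) = (β / 2 * ·) '' Icc 0 1 := by
    rw [image_mul_left_Icc (by positivity) zero_le_one, mul_zero, mul_one]
  rw [GExp, hIcc, image_image]
  refine congrArg sSup (image_congr fun s hs => gExp_eq_gExpNat_div k ?_)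
  nlinarith [hs.1, hs.2]

lemma continuousOn_GExp (k : ℕ) : ContinuousOn (GExp k) (Icc 0 1) := by
  have hcont : Continuous fun β => sSup ((fun s => gExpNat k β (β / 2 * s) / log 2) '' Icc 0 1) :=
    isCompact_Icc.continuous_sSup (f := fun β s => gExpNat k β (β / 2 * s) / log 2)
      (by fun_prop)
  exact hcont.continuousOn.congr fun β hβ => GExp_eq_sSup_reparam k hβ.1 hβ.2

lemma gExpNat_diag_eq (q c s : ℝ) :
    gExpNat q (c + 2 * s) s = c * log (q - 1) - (1 - s) * log q + 2 * negMulLog s +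
      negMulLog (1 - s) + negMulLog c + negMulLog (1 - c - s) := by
  unfold gExpNat
  ring_nf

lemma hasDerivAt_gExpNat_diag (q c : ℝ) {s : ℝ} (hs : s ≠ 0) (hs1 : 1 - s ≠ 0)
    (hcs : 1 - c - s ≠ 0) :
    HasDerivAt (fun s => gExpNat q (c + 2 * s) s)
      (log q - 2 * log s + log (1 - s) + log (1 - c - s)) s := by
  simp only [gExpNat_diag_eq]
  have h1 := (Real.hasDerivAt_negMulLog hs1).comp s ((hasDerivAt_id' s).const_sub 1)
  have h2 := (Real.hasDerivAt_negMulLog hcs).comp s ((hasDerivAt_id' s).const_sub (1 - c))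
  have h := (((((hasDerivAt_const s (c * log (q - 1))).sub
    (((hasDerivAt_id' s).const_sub 1).mul_const (log q))).add
    ((Real.hasDerivAt_negMulLog hs).const_mul 2)).add h1).add
    (hasDerivAt_const s (negMulLog c))).add h2
  exact h.congr_deriv (by ring)

lemma gExpNat_diag_strictMonoOn {q c : ℝ} (hq : 1 < q) (hc : 0 ≤ c) :
    StrictMonoOn (fun s => gExpNat q (c + 2 * s) s) (Icc 0 ((1 - c) / 2)) := by
  refine strictMonoOn_of_deriv_pos (convex_Icc _ _) (by fun_prop) fun s hs => ?_
  rw [interior_Icc] at hs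
  obtain ⟨hs0, hsc⟩ := hs
  have hs1 : s < 1 - s := by linarith
  have hcs : s < 1 - c - s := by linarith
  rw [(hasDerivAt_gExpNat_diag q c hs0.ne' (by linarith) (by linarith)).deriv]
  have := Real.log_pos hq
  have := Real.log_lt_log hs0 hs1
  have := Real.log_lt_log hs0 hcs
  linarith

lemma GExp_strictMonoOn {k : ℕ} (hk : 1 < (k : ℝ)) : StrictMonoOn (GExp k) (Icc 0 1) := by
  rintro β₁ ⟨hβ₁, -⟩ β₂ ⟨-, hβ₂⟩ hlt
  obtain ⟨δ, hδ, hmax⟩ := isCompact_Icc.exists_sSup_image_eq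
    ⟨0, left_mem_Icc.2 (by linarith)⟩ (continuousOn_gExp k (β := β₁) (by linarith))
  have hmono : gExpNat k β₁ δ < gExpNat k β₂ (δ + (β₂ - β₁) / 2) := by
    have := gExpNat_diag_strictMonoOn (c := β₁ - 2 * δ) hk (by linarith [hδ.2])
      ⟨hδ.1, by linarith⟩ ⟨by linarith [hδ.1], by linarith⟩ (by linarith : δ < δ + (β₂ - β₁) / 2)
    dsimp only at this
    rwa [sub_add_cancel, show β₁ - 2 * δ + 2 * (δ + (β₂ - β₁) / 2) = β₂ by ring] at this
  have hmem : δ + (β₂ - β₁) / 2 ∈ Icc 0 (β₂ / 2) := ⟨by linarith [hδ.1], by linarith [hδ.2]⟩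
  calc GExp k β₁ = gExp k β₁ δ := hmax
    _ = gExpNat k β₁ δ / log 2 := gExp_eq_gExpNat_div k (by linarith [hδ.2])
    _ < gExpNat k β₂ (δ + (β₂ - β₁) / 2) / log 2 :=
        div_lt_div_of_pos_right hmono (Real.log_pos one_lt_two)
    _ = gExp k β₂ (δ + (β₂ - β₁) / 2) := (gExp_eq_gExpNat_div k (by linarith [hδ.2])).symm
    _ ≤ GExp k β₂ :=
        le_csSup (isCompact_Icc.bddAbove_image (continuousOn_gExp k (by linarith)))
          (mem_image_of_mem _ hmem)

lemma GExp_zero (k : ℕ) : GExp k 0 = -logb 2 k := by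
  rw [GExp, zero_div, Icc_self, image_singleton, csSup_singleton]
  simp [gExp, binEntropy]

lemma gExpNat_one_inv_add_one {q : ℝ} (hq : 0 < q) :
    gExpNat q 1 (q + 1)⁻¹ = 2 * Real.binEntropy (q + 1)⁻¹ := by
  set δ := (q + 1)⁻¹
  have hδ : (q + 1) * δ = 1 := mul_inv_cancel₀ (by linarith)
  have h1 : 1 - 2 * δ = (q - 1) * δ := by linear_combination -hδ
  have h2 : 1 - δ = q * δ := by linear_combination -hδ
  rw [gExpNat, Real.binEntropy_eq_negMulLog_add_negMulLog_one_sub, h1, h2,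
    show 1 - 1 + δ = δ by ring, Real.negMulLog_mul, Real.negMulLog_mul]
  unfold Real.negMulLog
  ring

lemma GExp_one_pos {k : ℕ} (hk : 1 < (k : ℝ)) : 0 < GExp k 1 := by
  have hδ : ((k : ℝ) + 1)⁻¹ ∈ Icc 0 (1 / 2) := by
    refine ⟨by positivity, ?_⟩
    rw [inv_le_comm₀ (by positivity) (by norm_num)]
    linarith
  have hpos : 0 < gExp k 1 ((k : ℝ) + 1)⁻¹ := by
    rw [gExp_eq_gExpNat_div k (by linarith [hδ.2]), gExpNat_one_inv_add_one (by linarith)]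
    refine div_pos (mul_pos two_pos (Real.binEntropy_pos (by positivity) ?_))
      (Real.log_pos one_lt_two)
    exact inv_lt_one_of_one_lt₀ (by linarith)
  exact hpos.trans_le
    (le_csSup (isCompact_Icc.bddAbove_image (continuousOn_gExp k (by norm_num)))
      (mem_image_of_mem _ hδ))

lemma StrictMonoOn.setOf_neg_eq_Ico {f : ℝ → ℝ} {a b z : ℝ} (hf : StrictMonoOn f (Icc a b))
    (hz : z ∈ Icc a b) (hfz : f z = 0) :
    {x | x ∈ Icc a b ∧ f x < 0} = Ico a z := by
  ext x
  constructor
  · rintro ⟨hx, hfx⟩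
    exact ⟨hx.1, (hf.lt_iff_lt hx hz).1 (hfz ▸ hfx)⟩
  · rintro ⟨hax, hxz⟩
    have hx : x ∈ Icc a b := ⟨hax, hxz.le.trans hz.2⟩
    exact ⟨hx, hfz ▸ hf hx hz hxz⟩

/-- `G_k` is strictly increasing on `[0,1]`, is negative at `0` and positive
at `1`, and has a unique zero `β*` in `(0,1)`; moreover
`{β ∈ [0,1] : G_k(β) < 0} = [0, β*)`, so `β* = sup {β ∈ [0,1] : G_k(β) < 0}`. -/
theorem GExp_strictMono_unique_zero (k : ℕ) (hk : 2 ≤ k) :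
    StrictMonoOn (GExp k) (Set.Icc 0 1) ∧
    GExp k 0 < 0 ∧ 0 < GExp k 1 ∧
    ∃ βs ∈ Set.Ioo (0 : ℝ) 1, GExp k βs = 0 ∧
      (∀ β' ∈ Set.Ioo (0 : ℝ) 1, GExp k β' = 0 → β' = βs) ∧
      {β : ℝ | β ∈ Set.Icc (0 : ℝ) 1 ∧ GExp k β < 0} = Set.Ico 0 βs ∧
      βs = sSup {β : ℝ | β ∈ Set.Icc (0 : ℝ) 1 ∧ GExp k β < 0} := by
  have hk' : 1 < (k : ℝ) := by exact_mod_cast hk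
  have hmono := GExp_strictMonoOn hk'
  have hG0 : GExp k 0 < 0 := by
    rw [GExp_zero]
    exact neg_neg_of_pos (Real.logb_pos one_lt_two hk')
  have hG1 := GExp_one_pos hk'
  obtain ⟨βs, hβs, hzero⟩ :=
    intermediate_value_Icc zero_le_one (continuousOn_GExp k) ⟨hG0.le, hG1.le⟩
  have hβs' : βs ∈ Ioo 0 1 :=
    ⟨hβs.1.lt_of_ne (by rintro rfl; linarith), hβs.2.lt_of_ne (by rintro rfl; linarith)⟩
  have hneg := hmono.setOf_neg_eq_Ico hβs hzero
  refine ⟨hmono, hG0, hG1, βs, hβs', hzero, fun β hβ hβ0 => ?_, hneg, ?_⟩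
  · exact hmono.injOn (Ioo_subset_Icc_self hβ) hβs (hβ0.trans hzero.symm)
  · rw [hneg, csSup_Ico hβs'.1]
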